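/- arXiv:2310.11021 — 5 statements merged into one kernel-verified Lean document; each statement's English description precedes it below -/
import Mathlib

section
/- Let n ≥ 2 and l ≥ 1 with l ≤ n−2. Consider the 2n×2n block matrix M = [[0, B],[F, 0]] where B is the n×n Boolean matrix with B_{ij} = 1 iff j ≥ max(i−l, 0), and F is the n×n Boolean matrix with F_{ij} = 1 iff j = i + l + 1 (and i ≤ n−l−2). Then M (viewed with natural number entries) is nilpotent. -/
lemma aux_pow_zero {α : Type*} [Fintype α] [DecidableEq α] (M : Matrix α α ℕ)
    (f : α → ℕ) (hf : ∀ a b, M a b ≠ 0 → f a < f b) :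
    ∀ k a b, (M ^ k) a b ≠ 0 → f a + k ≤ f b := by
  intro k
  induction k with
  | zero =>
    intro a b h
    simp [Matrix.one_apply] at h
    obtain ⟨rfl, -⟩ := h
    simp
  | succ k ih =>
    intro a b h
    rw [pow_succ, Matrix.mul_apply] at h
    obtain ⟨c, hc⟩ : ∃ c, (M ^ k) a c * M c b ≠ 0 := by
      by_contra hno
      push_neg at hno
      exact h (Finset.sum_eq_zero fun c _ => hno c)
    have h1 : (M ^ k) a c ≠ 0 := fun h0 => hc (by simp [h0])
    have h2 : M c b ≠ 0 := fun h0 => hc (by simp [h0])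
    have := ih a c h1
    have := hf c b h2
    omega

lemma aux_nilpotent {α : Type*} [Fintype α] [DecidableEq α] (M : Matrix α α ℕ)
    (f : α → ℕ) (N : ℕ) (hN : ∀ a, f a < N)
    (hf : ∀ a b, M a b ≠ 0 → f a < f b) : IsNilpotent M := by
  refine ⟨N, ?_⟩
  ext a b
  simp only [Matrix.zero_apply]
  by_contra h
  have := aux_pow_zero M f hf N a b h
  have := hN a
  have := hN b
  omega

/-- The modified-DAG adjacency matrix of the l-layer linearly entangled circuit
with the added reuse edges F_{i,i+l+1} is nilpotent. -/
theorem linear_layer_modified_nilpotent (n l : ℕ) (hn : 2 ≤ n) (hl : 1 ≤ l)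
    (hln : l ≤ n - 2) :
    IsNilpotent (Matrix.fromBlocks
      (0 : Matrix (Fin n) (Fin n) ℕ)
      (Matrix.of fun i j : Fin n => if (i : ℕ) ≤ (j : ℕ) + l then (1 : ℕ) else 0)
      (Matrix.of fun i j : Fin n => if (j : ℕ) = (i : ℕ) + l + 1 then (1 : ℕ) else 0)
      (0 : Matrix (Fin n) (Fin n) ℕ)) := by
  apply aux_nilpotent _ (fun a => Sum.elim (fun i : Fin n => 2 * (i : ℕ))
      (fun j : Fin n => 2 * (j : ℕ) + 2 * l + 1) a) (2 * n + 2 * l + 1)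
  · rintro (a | a) <;> simp <;> omega
  · rintro (a | a) (b | b) <;>
      simp only [Matrix.fromBlocks_apply₁₁, Matrix.fromBlocks_apply₁₂,
        Matrix.fromBlocks_apply₂₁, Matrix.fromBlocks_apply₂₂, Matrix.zero_apply,
        Matrix.of_apply, Sum.elim_inl, Sum.elim_inr, ne_eq] <;>
      intro h
    · exact absurd trivial h
    · split at h <;> omega
    · split at h <;> omega
    · exact absurd trivial h
end

section
/- Let n ≥ 2, and let B be the n×n Boolean matrix with B_{ij} = 1 iff j ≥ max(i−1, 0). Let F be any n×n Boolean matrix satisfying: (1) F_{ij} = 1 implies B_{ji} = 0; (2) each row of F has at most one 1; (3) each column of F has at most one 1; (4) the block matrix [[0,B],[F,0]] is nilpotent. Then the maximum number of 1-entries in any such feasible F (the linearly entangled circuit with l = 1 layer) is exactly n−2, attained by F with F_{i,i+2} = 1 for 0 ≤ i ≤ n−3. -/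
/-- A strictly upper triangular matrix has `N ^ n = 0`. -/
lemma strict_upper_pow_eq_zero {n : ℕ} (N : Matrix (Fin n) (Fin n) ℕ)
    (h : ∀ i j : Fin n, (j : ℕ) ≤ (i : ℕ) → N i j = 0) : N ^ n = 0 := by
  have key : ∀ k : ℕ, ∀ i j : Fin n, (j : ℕ) < (i : ℕ) + k → (N ^ k) i j = 0 := by
    intro k
    induction k with
    | zero =>
      intro i j hj
      simp only [pow_zero, Matrix.one_apply]
      have : i ≠ j := by
        intro e; subst e; omega
      simp [this]
    | succ k ih =>
      intro i j hj
      rw [pow_succ, Matrix.mul_apply]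
      apply Finset.sum_eq_zero
      intro x _
      by_cases hx : (x : ℕ) < (i : ℕ) + k
      · rw [ih i x hx, zero_mul]
      · have : (j : ℕ) ≤ (x : ℕ) := by omega
        rw [h x j this, mul_zero]
  ext i j
  exact key n i j (by omega)

lemma fromBlocks_diag_pow {n : ℕ} (X Y : Matrix (Fin n) (Fin n) ℕ) (k : ℕ) :
    (Matrix.fromBlocks X 0 0 Y) ^ k = Matrix.fromBlocks (X ^ k) 0 0 (Y ^ k) := by
  induction k with
  | zero => simp [Matrix.fromBlocks_one]
  | succ k ih => rw [pow_succ, ih, pow_succ, pow_succ, Matrix.fromBlocks_multiply]; simp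

/-- Optimal qubit reuse for the linearly entangled circuit with one layer:
any feasible assignment F has at most n−2 ones, and the assignment
F_{i,i+2} (0 ≤ i ≤ n−3) is feasible with exactly n−2 ones. -/
theorem linear_one_layer_optimal (n : ℕ) (hn : 2 ≤ n) :
    (∀ F : Matrix (Fin n) (Fin n) Bool,
      (∀ i j : Fin n, F i j = true → ¬ ((j : ℕ) ≤ (i : ℕ) + 1)) →
      (∀ i j j' : Fin n, F i j = true → F i j' = true → j = j') →
      (∀ i i' j : Fin n, F i j = true → F i' j = true → i = i') →
      IsNilpotent (Matrix.fromBlocks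
        (0 : Matrix (Fin n) (Fin n) ℕ)
        (Matrix.of fun i j : Fin n => if (i : ℕ) ≤ (j : ℕ) + 1 then (1 : ℕ) else 0)
        (Matrix.of fun i j : Fin n => if F i j then (1 : ℕ) else 0)
        (0 : Matrix (Fin n) (Fin n) ℕ)) →
      (Finset.univ.filter fun p : Fin n × Fin n => F p.1 p.2 = true).card ≤ n - 2) ∧
    ((∀ i j : Fin n, ((j : ℕ) = (i : ℕ) + 2 : Prop) → ¬ ((j : ℕ) ≤ (i : ℕ) + 1)) ∧
      IsNilpotent (Matrix.fromBlocks
        (0 : Matrix (Fin n) (Fin n) ℕ)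
        (Matrix.of fun i j : Fin n => if (i : ℕ) ≤ (j : ℕ) + 1 then (1 : ℕ) else 0)
        (Matrix.of fun i j : Fin n => if (j : ℕ) = (i : ℕ) + 2 then (1 : ℕ) else 0)
        (0 : Matrix (Fin n) (Fin n) ℕ)) ∧
      (Finset.univ.filter fun p : Fin n × Fin n =>
        (p.2 : ℕ) = (p.1 : ℕ) + 2).card = n - 2) := by
  constructor
  · -- upper bound
    intro F h1 h2 _h3 _h4
    have : (Finset.univ.filter fun p : Fin n × Fin n => F p.1 p.2 = true).card ≤
        (Finset.range (n - 2)).card := by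
      apply Finset.card_le_card_of_injOn (fun p => (p.1 : ℕ))
      · intro p hp
        simp only [Finset.mem_coe, Finset.mem_filter, Finset.mem_univ, true_and] at hp
        have := h1 p.1 p.2 hp
        have := p.2.isLt
        simp only [Finset.mem_coe, Finset.mem_range]
        omega
      · intro p hp q hq hpq
        simp only [Finset.coe_filter, Finset.mem_univ, true_and, Set.mem_setOf_eq] at hp hq
        have h1' : p.1 = q.1 := Fin.ext hpq
        have h2' : p.2 = q.2 := h2 p.1 p.2 q.2 hp (h1' ▸ hq)
        exact Prod.ext h1' h2'
    simpa using this
  · refine ⟨fun i j hj => by omega, ?_, ?_⟩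
    · -- nilpotency
      set B : Matrix (Fin n) (Fin n) ℕ :=
        Matrix.of fun i j : Fin n => if (i : ℕ) ≤ (j : ℕ) + 1 then (1 : ℕ) else 0 with hB
      set F : Matrix (Fin n) (Fin n) ℕ :=
        Matrix.of fun i j : Fin n => if (j : ℕ) = (i : ℕ) + 2 then (1 : ℕ) else 0 with hF
      refine ⟨2 * n, ?_⟩
      rw [pow_mul]
      have hsq : (Matrix.fromBlocks 0 B F 0) ^ 2 = Matrix.fromBlocks (B * F) 0 0 (F * B) := by
        rw [sq, Matrix.fromBlocks_multiply]
        simp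
      rw [hsq, fromBlocks_diag_pow]
      have hBF : (B * F) ^ n = 0 := by
        apply strict_upper_pow_eq_zero
        intro i j hij
        rw [Matrix.mul_apply]
        apply Finset.sum_eq_zero
        intro x _
        simp only [hB, hF, Matrix.of_apply]
        by_cases hc : (j : ℕ) = (x : ℕ) + 2
        · rw [if_neg (show ¬ ((i : ℕ) ≤ (x : ℕ) + 1) by omega), zero_mul]
        · rw [if_neg hc, mul_zero]
      have hFB : (F * B) ^ n = 0 := by
        apply strict_upper_pow_eq_zero
        intro i j hij
        rw [Matrix.mul_apply]
        apply Finset.sum_eq_zero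
        intro x _
        simp only [hB, hF, Matrix.of_apply]
        by_cases hc : (x : ℕ) = (i : ℕ) + 2
        · rw [if_neg (show ¬ ((x : ℕ) ≤ (j : ℕ) + 1) by omega), mul_zero]
        · rw [if_neg hc, zero_mul]
      rw [hBF, hFB]
      ext (i | i) (j | j) <;> simp [Matrix.fromBlocks]
    · -- cardinality
      rw [← Finset.card_range (n - 2)]
      refine Finset.card_bij' (fun (p : Fin n × Fin n) _ => ((p.1 : ℕ)))
        (fun k hk => (⟨k, by simp only [Finset.mem_range] at hk; omega⟩,
          ⟨k + 2, by simp only [Finset.mem_range] at hk; omega⟩)) ?_ ?_ ?_ ?_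
      · intro p hp
        simp only [Finset.mem_filter, Finset.mem_univ, true_and] at hp
        have := p.2.isLt
        simp only [Finset.mem_range]
        omega
      · intro k hk
        simp
      · intro p hp
        simp only [Finset.mem_filter, Finset.mem_univ, true_and] at hp
        refine Prod.ext (Fin.ext rfl) (Fin.ext ?_)
        simp [hp]
      · intro k hk
        rfl
end

section
/- Let B be the n×n Boolean matrix with B_{ij} = 1 iff |i−j| ≤ 1, or (i even and j = i+2), or (j odd and i = j+2) (one pairwise entanglement layer). Then for every l ≥ 1, the l-fold Boolean power satisfies (B^{⊙l})_{ij} = 1 iff |i−j| ≤ 2l−1, or (i even and j = i+2l), or (j odd and i = j+2l). In particular B^{⊙l} = J_n if and only if l ≥ ⌈n/2⌉. -/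
/-- The Boolean matrix product. -/
noncomputable def bmul {k : ℕ} (A B : Matrix (Fin k) (Fin k) Bool) : Matrix (Fin k) (Fin k) Bool :=
  Matrix.of fun i j => Finset.univ.sup fun l => A i l && B l j

/-- Boolean matrix power. -/
noncomputable def bpow {k : ℕ} (B : Matrix (Fin k) (Fin k) Bool) : ℕ → Matrix (Fin k) (Fin k) Bool
  | 0 => Matrix.of fun i j => decide (i = j)
  | l + 1 => bmul B (bpow B l)

/-- The one-layer pairwisely entangled biadjacency matrix. -/
def pairB (n : ℕ) : Matrix (Fin n) (Fin n) Bool :=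
  Matrix.of fun i j : Fin n => decide
    (((i : ℕ) ≤ (j : ℕ) + 1 ∧ (j : ℕ) ≤ (i : ℕ) + 1) ∨
      (Even (i : ℕ) ∧ (j : ℕ) = (i : ℕ) + 2) ∨
      (Odd (j : ℕ) ∧ (i : ℕ) = (j : ℕ) + 2))

lemma bool_sup_iff {α : Type*} (s : Finset α) (f : α → Bool) :
    s.sup f = true ↔ ∃ a ∈ s, f a = true := by
  classical
  induction s using Finset.induction with
  | empty => simp
  | insert _ _ h ih => simp [Finset.sup_insert, ih,
      show ∀ a b : Bool, a ⊔ b = (a || b) from fun _ _ => rfl, Bool.or_eq_true]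

lemma pairB_apply {n : ℕ} (i j : Fin n) :
    pairB n i j = true ↔
      (((i : ℕ) ≤ (j : ℕ) + 1 ∧ (j : ℕ) ≤ (i : ℕ) + 1) ∨
        (Even (i : ℕ) ∧ (j : ℕ) = (i : ℕ) + 2) ∨
        (Odd (j : ℕ) ∧ (i : ℕ) = (j : ℕ) + 2)) := by
  simp [pairB]

lemma entry (n : ℕ) (hn : 2 ≤ n) (l : ℕ) (hl : 1 ≤ l) :
    ∀ i j : Fin n, bpow (pairB n) l i j = decide
      (((i : ℕ) ≤ (j : ℕ) + (2 * l - 1) ∧ (j : ℕ) ≤ (i : ℕ) + (2 * l - 1)) ∨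
        (Even (i : ℕ) ∧ (j : ℕ) = (i : ℕ) + 2 * l) ∨
        (Odd (j : ℕ) ∧ (i : ℕ) = (j : ℕ) + 2 * l)) := by
  induction l, hl using Nat.le_induction with
  | base =>
    intro i j
    show bmul (pairB n) (bpow (pairB n) 0) i j = _
    rw [Bool.eq_iff_iff, decide_eq_true_eq]
    show (Finset.univ.sup fun k => pairB n i k && bpow (pairB n) 0 k j) = true ↔ _
    rw [bool_sup_iff]
    constructor
    · rintro ⟨k, -, hk⟩
      rw [Bool.and_eq_true] at hk
      obtain ⟨h1, h2⟩ := hk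
      have hkj : k = j := by simpa [bpow] using h2
      subst hkj
      rw [pairB_apply] at h1
      simp only [Nat.even_iff, Nat.odd_iff] at h1 ⊢
      omega
    · intro h
      refine ⟨j, Finset.mem_univ _, ?_⟩
      rw [Bool.and_eq_true]
      refine ⟨?_, by simp [bpow]⟩
      rw [pairB_apply]
      simp only [Nat.even_iff, Nat.odd_iff] at h ⊢
      omega
  | succ l hl ih =>
    intro i j
    show bmul (pairB n) (bpow (pairB n) l) i j = _
    rw [Bool.eq_iff_iff, decide_eq_true_eq]
    show (Finset.univ.sup fun k => pairB n i k && bpow (pairB n) l k j) = true ↔ _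
    rw [bool_sup_iff]
    have ha : (i : ℕ) < n := i.isLt
    have hb : (j : ℕ) < n := j.isLt
    constructor
    · rintro ⟨k, -, hk⟩
      rw [Bool.and_eq_true, ih k j, decide_eq_true_eq, pairB_apply] at hk
      obtain ⟨h1, h2⟩ := hk
      simp only [Nat.even_iff, Nat.odd_iff] at h1 h2 ⊢
      omega
    · intro h
      simp only [Nat.even_iff, Nat.odd_iff] at h
      have wit : ∀ kv : ℕ, ∀ h1 : kv < n,
          (((i:ℕ) ≤ kv + 1 ∧ kv ≤ (i:ℕ) + 1) ∨ ((i:ℕ) % 2 = 0 ∧ kv = (i:ℕ) + 2) ∨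
            (kv % 2 = 1 ∧ (i:ℕ) = kv + 2)) →
          ((kv ≤ (j:ℕ) + (2*l-1) ∧ (j:ℕ) ≤ kv + (2*l-1)) ∨ (kv % 2 = 0 ∧ (j:ℕ) = kv + 2*l) ∨
            ((j:ℕ) % 2 = 1 ∧ kv = (j:ℕ) + 2*l)) →
          ∃ k ∈ Finset.univ, (pairB n i k && bpow (pairB n) l k j) = true := by
        intro kv h1 h2 h3
        refine ⟨⟨kv, h1⟩, Finset.mem_univ _, ?_⟩
        rw [Bool.and_eq_true, ih _ j, decide_eq_true_eq, pairB_apply]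
        simp only [Nat.even_iff, Nat.odd_iff]
        exact ⟨h2, h3⟩
      set a := (i : ℕ) with haa
      set b := (j : ℕ) with hbb
      rcases h with h | ⟨hp, he⟩ | ⟨hp, he⟩
      · by_cases hC : a ≤ b + (2*l-1) ∧ b ≤ a + (2*l-1)
        · exact wit a ha (by omega) (by omega)
        · have h4 : b = a + 2*l ∨ (b = a+2*l+1 ∧ a % 2 = 0) ∨ (b = a+2*l+1 ∧ a % 2 = 1) ∨
              a = b + 2*l ∨ (a = b+2*l+1 ∧ b % 2 = 1) ∨ (a = b+2*l+1 ∧ b % 2 = 0) := by omega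
          rcases h4 with h4 | ⟨h4, hp⟩ | ⟨h4, hp⟩ | h4 | ⟨h4, hp⟩ | ⟨h4, hp⟩
          · exact wit (a+1) (by omega) (by omega) (by omega)
          · exact wit (a+2) (by omega) (by omega) (by omega)
          · exact wit (a+1) (by omega) (by omega) (by omega)
          · exact wit (a-1) (by omega) (by omega) (by omega)
          · exact wit (a-1) (by omega) (by omega) (by omega)
          · exact wit (a-2) (by omega) (by omega) (by omega)
      · exact wit (a+2) (by omega) (by omega) (by omega)
      · exact wit (a-2) (by omega) (by omega) (by omega)

/-- Boolean powers of the pairwise layer: (B^{⊙l})_{ij} = 1 iff |i−j| ≤ 2l−1,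
or (i even and j = i+2l), or (j odd and i = j+2l); and B^{⊙l} is all-ones
iff l ≥ ⌈n/2⌉. -/
theorem pairwise_layer_bpow (n : ℕ) (hn : 2 ≤ n) (l : ℕ) (hl : 1 ≤ l) :
    (∀ i j : Fin n, bpow (pairB n) l i j = decide
      (((i : ℕ) ≤ (j : ℕ) + (2 * l - 1) ∧ (j : ℕ) ≤ (i : ℕ) + (2 * l - 1)) ∨
        (Even (i : ℕ) ∧ (j : ℕ) = (i : ℕ) + 2 * l) ∨
        (Odd (j : ℕ) ∧ (i : ℕ) = (j : ℕ) + 2 * l))) ∧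
    (bpow (pairB n) l = (Matrix.of fun _ _ : Fin n => true) ↔ (n + 1) / 2 ≤ l) := by
  have he := entry n hn l hl
  refine ⟨he, ?_⟩
  constructor
  · intro hall
    have h0 : bpow (pairB n) l ⟨n-1, by omega⟩ ⟨0, by omega⟩ = true := by rw [hall]; rfl
    rw [he, decide_eq_true_eq] at h0
    simp only [Nat.even_iff, Nat.odd_iff] at h0
    omega
  · intro hle
    ext i j
    rw [he, Matrix.of_apply]
    rw [decide_eq_true_eq]
    have ha : (i : ℕ) < n := i.isLt
    have hb : (j : ℕ) < n := j.isLt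
    left
    omega
end

section
/- Let n ≥ 2 and let B be the (n+1)×(n+1) Boolean matrix given by B_{ij} = 1 iff (j ≥ i) or (i = n and j ≤ n−1) — the biadjacency matrix of the simplified DAG of the Bernstein–Vazirani circuit with all-ones secret string. Let F be the Boolean matrix with F_{i,i+1} = 1 for 0 ≤ i ≤ n−2 and all other entries zero. Then (1) F_{ij} = 1 implies B_{ji} = 0; (2) each row and each column of F has at most one 1; (3) the block matrix [[0, B],[F, 0]] is nilpotent; and (4) F has n−1 ones, so no feasible F can have more ones (since any feasible F has at most one 1 per row and rows n−1 and n of the candidate matrix ¬(B^T) are zero). -/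
lemma BV.pow_eq_zero_of_grading {ι : Type*} [Fintype ι] [DecidableEq ι]
    (M : Matrix ι ι ℕ) (f : ι → ℕ) (N : ℕ) (hb : ∀ i, f i < N)
    (h : ∀ i j, M i j ≠ 0 → f i < f j) : M ^ N = 0 := by
  have key : ∀ k i j, (M ^ k) i j ≠ 0 → f i + k ≤ f j := by
    intro k
    induction k with
    | zero =>
      intro i j hij
      rw [pow_zero] at hij
      by_cases hij' : i = j
      · subst hij'; omega
      · simp [Matrix.one_apply_ne hij'] at hij
    | succ k ih =>
      intro i j hij
      rw [pow_succ, Matrix.mul_apply] at hij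
      obtain ⟨l, -, hl⟩ := Finset.exists_ne_zero_of_sum_ne_zero hij
      rw [Nat.mul_ne_zero_iff] at hl
      have h1 := ih i l hl.1
      have h2 := h l j hl.2
      omega
  ext i j
  simp only [Matrix.zero_apply]
  by_contra hij
  have := key N i j hij
  have := hb j
  omega

lemma BV.card_rows (n : ℕ) (hn : 2 ≤ n) :
    (Finset.univ.filter fun i : Fin (n + 1) => (i : ℕ) ≤ n - 2).card = n - 1 := by
  rw [← Finset.card_range (n - 1)]
  refine Finset.card_bij' (fun i _ => (i : ℕ))
      (fun k hk => (⟨k, by have := Finset.mem_range.mp hk; omega⟩ : Fin (n + 1))) ?_ ?_ ?_ ?_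
  · intro i hi
    simp only [Finset.mem_filter] at hi
    simp only [Finset.mem_range]
    omega
  · intro k hk
    simp only [Finset.mem_filter, Finset.mem_univ, true_and]
    have := Finset.mem_range.mp hk
    omega
  · intro i hi; exact Fin.ext rfl
  · intro k hk; rfl

lemma BV.card_pairs (n : ℕ) (hn : 2 ≤ n) :
    (Finset.univ.filter fun p : Fin (n + 1) × Fin (n + 1) =>
      (p.2 : ℕ) = (p.1 : ℕ) + 1 ∧ (p.1 : ℕ) ≤ n - 2).card = n - 1 := by
  rw [← Finset.card_range (n - 1)]
  refine Finset.card_bij' (fun p _ => (p.1 : ℕ))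
      (fun k hk => ((⟨k, by have := Finset.mem_range.mp hk; omega⟩ : Fin (n + 1)),
        (⟨k + 1, by have := Finset.mem_range.mp hk; omega⟩ : Fin (n + 1)))) ?_ ?_ ?_ ?_
  · intro p hp
    simp only [Finset.mem_filter] at hp
    simp only [Finset.mem_range]
    omega
  · intro k hk
    simp only [Finset.mem_filter, Finset.mem_univ, true_and]
    have := Finset.mem_range.mp hk
    omega
  · intro p hp
    simp only [Finset.mem_filter] at hp
    obtain ⟨-, h1, h2⟩ := hp
    ext
    · rfl
    · exact h1.symm
  · intro k hk; rfl
/-- Optimal compilation of the Bernstein–Vazirani circuit with all-ones secret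
string on n+1 qubits: the assignment F_{i,i+1} (0 ≤ i ≤ n−2) is feasible with
n−1 ones, and no feasible assignment has more ones. -/
theorem bernstein_vazirani_optimal (n : ℕ) (hn : 2 ≤ n) :
    -- (1) F is below the candidate matrix
    (∀ i j : Fin (n + 1), ((j : ℕ) = (i : ℕ) + 1 ∧ (i : ℕ) ≤ n - 2) →
      ¬ ((j : ℕ) ≤ (i : ℕ) ∨ ((j : ℕ) = n ∧ (i : ℕ) < n))) ∧
    -- (2) each row and column of F has at most one 1
    (∀ i j j' : Fin (n + 1),
      ((j : ℕ) = (i : ℕ) + 1 ∧ (i : ℕ) ≤ n - 2) →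
      ((j' : ℕ) = (i : ℕ) + 1 ∧ (i : ℕ) ≤ n - 2) → j = j') ∧
    (∀ i i' j : Fin (n + 1),
      ((j : ℕ) = (i : ℕ) + 1 ∧ (i : ℕ) ≤ n - 2) →
      ((j : ℕ) = (i' : ℕ) + 1 ∧ (i' : ℕ) ≤ n - 2) → i = i') ∧
    -- (3) the modified-DAG adjacency matrix is nilpotent
    IsNilpotent (Matrix.fromBlocks
      (0 : Matrix (Fin (n + 1)) (Fin (n + 1)) ℕ)
      (Matrix.of fun i j : Fin (n + 1) =>
        if (i : ℕ) ≤ (j : ℕ) ∨ ((i : ℕ) = n ∧ (j : ℕ) < n) then (1 : ℕ) else 0)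
      (Matrix.of fun i j : Fin (n + 1) =>
        if (j : ℕ) = (i : ℕ) + 1 ∧ (i : ℕ) ≤ n - 2 then (1 : ℕ) else 0)
      (0 : Matrix (Fin (n + 1)) (Fin (n + 1)) ℕ)) ∧
    -- (4) F has n−1 ones, and no feasible F' has more
    (Finset.univ.filter fun p : Fin (n + 1) × Fin (n + 1) =>
      (p.2 : ℕ) = (p.1 : ℕ) + 1 ∧ (p.1 : ℕ) ≤ n - 2).card = n - 1 ∧
    (∀ F : Matrix (Fin (n + 1)) (Fin (n + 1)) Bool,
      (∀ i j : Fin (n + 1), F i j = true →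
        ¬ ((j : ℕ) ≤ (i : ℕ) ∨ ((j : ℕ) = n ∧ (i : ℕ) < n))) →
      (∀ i j j' : Fin (n + 1), F i j = true → F i j' = true → j = j') →
      (∀ i i' j : Fin (n + 1), F i j = true → F i' j = true → i = i') →
      IsNilpotent (Matrix.fromBlocks
        (0 : Matrix (Fin (n + 1)) (Fin (n + 1)) ℕ)
        (Matrix.of fun i j : Fin (n + 1) =>
          if (i : ℕ) ≤ (j : ℕ) ∨ ((i : ℕ) = n ∧ (j : ℕ) < n) then (1 : ℕ) else 0)
        (Matrix.of fun i j : Fin (n + 1) => if F i j then (1 : ℕ) else 0)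
        (0 : Matrix (Fin (n + 1)) (Fin (n + 1)) ℕ)) →
      (Finset.univ.filter fun p : Fin (n + 1) × Fin (n + 1) =>
        F p.1 p.2 = true).card ≤ n - 1) := by
  refine ⟨?_, ?_, ?_, ?_, BV.card_pairs n hn, ?_⟩
  · -- (1)
    rintro i j ⟨hj, hi⟩
    have := j.is_le
    omega
  · -- (2) row
    rintro i j j' ⟨h1, -⟩ ⟨h2, -⟩
    exact Fin.ext (by omega)
  · -- (2) col
    rintro i i' j ⟨h1, -⟩ ⟨h2, -⟩
    exact Fin.ext (by omega)
  · -- (3) nilpotency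
    refine ⟨2 * n + 3, BV.pow_eq_zero_of_grading _
      (fun x => Sum.elim (fun i : Fin (n + 1) => if (i : ℕ) = n then 0 else 2 * i + 1)
        (fun j : Fin (n + 1) => 2 * j + 2) x) (2 * n + 3) ?_ ?_⟩
    · rintro (i | j)
      · have := i.is_le; simp only [Sum.elim_inl]; split <;> omega
      · have := j.is_le; simp only [Sum.elim_inr]; omega
    · rintro (i | i) (j | j) hij
      · simp [Matrix.fromBlocks_apply₁₁] at hij
      · simp only [Matrix.fromBlocks_apply₁₂, Matrix.of_apply, ne_eq, ite_eq_right_iff,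
          one_ne_zero, imp_false, not_not] at hij
        simp only [Sum.elim_inl, Sum.elim_inr]
        split <;> omega
      · simp [Matrix.fromBlocks_apply₂₁] at hij
        simp only [Sum.elim_inl, Sum.elim_inr]
        split <;> omega
      · simp [Matrix.fromBlocks_apply₂₂] at hij
  · -- (4b) optimality
    intro F hcand hrow hcol _
    have key : ∀ p : Fin (n + 1) × Fin (n + 1), F p.1 p.2 = true → (p.1 : ℕ) ≤ n - 2 := by
      intro p hp
      have hc := hcand p.1 p.2 hp
      have h1 := p.1.is_le
      have h2 := p.2.is_le
      omega
    calc (Finset.univ.filter fun p : Fin (n + 1) × Fin (n + 1) => F p.1 p.2 = true).card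
        ≤ (Finset.univ.filter fun i : Fin (n + 1) => (i : ℕ) ≤ n - 2).card := by
          apply Finset.card_le_card_of_injOn (fun p => p.1)
          · intro p hp
            simp only [Finset.mem_coe, Finset.mem_filter, Finset.mem_univ, true_and] at hp ⊢
            exact key p hp
          · intro p hp q hq hpq
            simp only [Finset.mem_coe, Finset.mem_filter, Finset.mem_univ, true_and] at hp hq
            have : p.1 = q.1 := hpq
            refine Prod.ext this (hrow p.1 p.2 q.2 hp (by rw [this]; exact hq))
      _ = n - 1 := BV.card_rows n hn
end

section
/- Define reachability between qubits of a circuit given as a sequence of two-qubit gates: each gate at position k acting on qubits a and b generates relations a →_k b and b →_k a, and qubit q_i reaches q_j if there is a chain q_i →_{k_1} q_{l_1} →_{k_2} ... →_{k_{s+1}} q_j with k_1 ≤ k_2 ≤ ... ≤ k_{s+1} (or i = j). Then q_i reaches q_j if and only if the (i,j) entry of the Boolean product B_1 ⊙ B_2 ⊙ ... ⊙ B_m is 1, where B_k = I_n + E_{a_k b_k} + E_{b_k a_k} for the k-th gate acting on qubits a_k, b_k. -/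
/-- The Boolean identity matrix. -/
def idB {n : ℕ} : Matrix (Fin n) (Fin n) Bool :=
  Matrix.of fun u v => decide (u = v)

/-- The single-step relation generated by the k-th gate. -/
def gateRel {n m : ℕ} (g : Fin m → Fin n × Fin n) (k : Fin m) (a b : Fin n) : Prop :=
  (a = (g k).1 ∧ b = (g k).2) ∨ (a = (g k).2 ∧ b = (g k).1)

instance {n m : ℕ} (g : Fin m → Fin n × Fin n) (k : Fin m) (a b : Fin n) :
    Decidable (gateRel g k a b) := by
  unfold gateRel; infer_instance

/-- Qubit i reaches qubit j: there is a chain of gate relations with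
nondecreasing gate indices (reflexive for s = 0). -/
def Reaches {n m : ℕ} (g : Fin m → Fin n × Fin n) (i j : Fin n) : Prop :=
  ∃ (s : ℕ) (q : Fin (s + 1) → Fin n) (ks : Fin s → Fin m),
    q 0 = i ∧ q (Fin.last s) = j ∧ Monotone ks ∧
    ∀ a : Fin s, gateRel g (ks a) (q a.castSucc) (q a.succ)

lemma bool_sup_iff_s17 {β : Type*} [Fintype β] (f : β → Bool) :
    Finset.univ.sup f = true ↔ ∃ l, f l = true := by
  constructor
  · intro h
    by_contra hc
    push_neg at hc
    have hb : Finset.univ.sup f = (⊥ : Bool) :=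
      (Finset.sup_eq_bot_iff f _).2 fun l _ => by
        cases hf : f l
        · rfl
        · exact absurd hf (hc l)
    rw [h] at hb
    exact absurd hb (by simp)
  · rintro ⟨l, hl⟩
    have := Finset.le_sup (f := f) (Finset.mem_univ l)
    rw [hl] at this
    cases hs : Finset.univ.sup f
    · rw [hs] at this; exact absurd this (by decide)
    · rfl

/-- foldr of bmul over `List.ofFn f` characterized by chains. -/
lemma foldr_bmul_iff {n : ℕ} : ∀ (m : ℕ) (f : Fin m → Matrix (Fin n) (Fin n) Bool) (i j : Fin n),
    ((List.ofFn f).foldr bmul idB) i j = true ↔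
      ∃ q : Fin (m + 1) → Fin n, q 0 = i ∧ q (Fin.last m) = j ∧
        ∀ k : Fin m, f k (q k.castSucc) (q k.succ) = true := by
  intro m
  induction m with
  | zero =>
    intro f i j
    simp only [List.ofFn_zero, List.foldr_nil, idB, Matrix.of_apply, decide_eq_true_eq]
    constructor
    · rintro rfl
      exact ⟨fun _ => i, rfl, rfl, fun k => k.elim0⟩
    · rintro ⟨q, h0, hl, _⟩
      rw [← h0, ← hl]; rfl
  | succ m ih =>
    intro f i j
    rw [List.ofFn_succ, List.foldr_cons]
    show Finset.univ.sup (fun l => f 0 i l && _) = true ↔ _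
    rw [bool_sup_iff_s17]
    constructor
    · rintro ⟨l, hl⟩
      rw [Bool.and_eq_true] at hl
      obtain ⟨h1, h2⟩ := hl
      obtain ⟨q, hq0, hql, hqs⟩ := (ih (fun k => f k.succ) l j).1 h2
      refine ⟨Fin.cons i q, Fin.cons_zero _ _, ?_, ?_⟩
      · rw [← Fin.succ_last, Fin.cons_succ]; exact hql
      · intro k
        refine Fin.cases ?_ ?_ k
        · simpa [Fin.succ_zero_eq_one, Fin.cons_succ, hq0] using h1
        · intro k'
          have e1 : (Fin.cons i q : Fin (m+2) → Fin n) k'.succ.castSucc = q k'.castSucc := by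
            rw [← Fin.succ_castSucc, Fin.cons_succ]
          have e2 : (Fin.cons i q : Fin (m+2) → Fin n) k'.succ.succ = q k'.succ := by
            rw [Fin.cons_succ]
          rw [e1, e2]; exact hqs k'
    · rintro ⟨q, hq0, hql, hqs⟩
      refine ⟨q 1, ?_⟩
      rw [Bool.and_eq_true]
      constructor
      · have := hqs 0
        simpa [hq0, Fin.castSucc_zero, show ((0:Fin (m+1)).succ = (1 : Fin (m+2))) from rfl] using this
      · refine (ih (fun k => f k.succ) (q 1) j).2 ⟨fun a => q a.succ, ?_, ?_, ?_⟩
        · rfl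
        · show q (Fin.last m).succ = j
          rw [Fin.succ_last]; exact hql
        · intro k
          show f k.succ (q k.castSucc.succ) (q k.succ.succ) = true
          rw [Fin.succ_castSucc]; exact hqs k.succ

lemma chainSeg {α : Type*} (S : α → α → Prop) (hrefl : ∀ x, S x x)
    (htrans : ∀ {x y z}, S x y → S y z → S x z) (p : ℕ → α) (u v : ℕ) (huv : u ≤ v)
    (hs : ∀ t, u ≤ t → t < v → S (p t) (p (t + 1))) : S (p u) (p v) := by
  induction v, huv using Nat.le_induction with
  | base => exact hrefl _
  | succ w hw ih =>
    exact htrans (ih fun t ht1 ht2 => hs t ht1 (by omega)) (hs w hw (by omega))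

lemma gateRel_comp {n m : ℕ} {g : Fin m → Fin n × Fin n} {k : Fin m} {x y z : Fin n}
    (h1 : gateRel g k x y) (h2 : gateRel g k y z) : x = z := by
  obtain ⟨h1a, h1b⟩ | ⟨h1a, h1b⟩ := h1 <;> obtain ⟨h2a, h2b⟩ | ⟨h2a, h2b⟩ := h2 <;> simp_all

theorem reaches_iff_chain {n m : ℕ} (g : Fin m → Fin n × Fin n) (i j : Fin n) :
    Reaches g i j ↔ ∃ q : Fin (m + 1) → Fin n, q 0 = i ∧ q (Fin.last m) = j ∧
      ∀ t : Fin m, q t.castSucc = q t.succ ∨ gateRel g t (q t.castSucc) (q t.succ) := by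
  constructor
  · rintro ⟨s, q, ks, hq0, hql, hmono, hstep⟩
    set c : ℕ → ℕ := fun t => (Finset.univ.filter fun a : Fin s => (ks a : ℕ) < t).card with hc
    have hcs : ∀ t, c t ≤ s := fun t => by
      simpa using Finset.card_filter_le (Finset.univ : Finset (Fin s)) _
    have hc0 : c 0 = 0 := by simp [hc]
    have hcm : c m = s := by
      have h1 : (Finset.univ.filter fun a : Fin s => (ks a : ℕ) < m) = Finset.univ :=
        Finset.filter_true_of_mem fun a _ => (ks a).isLt
      simp [hc, h1]
    have hkey : ∀ (a : Fin s) (t : ℕ), (a : ℕ) < c t ↔ (ks a : ℕ) < t := by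
      intro a t
      constructor
      · intro h
        by_contra hc'
        push_neg at hc'
        have hsub : (Finset.univ.filter fun a' : Fin s => (ks a' : ℕ) < t) ⊆ Finset.Iio a := by
          intro a' ha'
          simp only [Finset.mem_filter, Finset.mem_univ, true_and] at ha'
          rw [Finset.mem_Iio]
          by_contra hle
          push_neg at hle
          have h2 := hmono hle
          rw [Fin.le_def] at h2
          omega
        have h3 := Finset.card_le_card hsub
        rw [Fin.card_Iio] at h3
        rw [show (Finset.univ.filter fun a' : Fin s => (ks a' : ℕ) < t).card = c t from rfl] at h3
        omega
      · intro h
        have hsub : Finset.Iic a ⊆ Finset.univ.filter fun a' : Fin s => (ks a' : ℕ) < t := by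
          intro a' ha'
          rw [Finset.mem_Iic] at ha'
          simp only [Finset.mem_filter, Finset.mem_univ, true_and]
          have h2 := hmono ha'
          rw [Fin.le_def] at h2
          omega
        have h3 := Finset.card_le_card hsub
        rw [Fin.card_Iic] at h3
        rw [show (Finset.univ.filter fun a' : Fin s => (ks a' : ℕ) < t).card = c t from rfl] at h3
        omega
    have hmonoc : ∀ t, c t ≤ c (t + 1) := fun t =>
      Finset.card_le_card (fun a ha => by
        simp only [Finset.mem_filter, Finset.mem_univ, true_and] at ha ⊢; omega)
    set p : ℕ → Fin n := fun v => q ⟨min v s, Nat.lt_succ_of_le (min_le_right v s)⟩ with hp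
    refine ⟨fun t => p (c (t : ℕ)), ?_, ?_, ?_⟩
    · show q ⟨min (c 0) s, _⟩ = i
      rw [← hq0]
      congr 1
      exact Fin.ext (by simp [hc0])
    · show q ⟨min (c m) s, _⟩ = j
      rw [← hql]
      congr 1
      exact Fin.ext (by simp [hcm])
    · intro t
      show p (c ((t.castSucc : Fin (m+1)) : ℕ)) = p (c ((t.succ : Fin (m+1)) : ℕ)) ∨
        gateRel g t (p (c ((t.castSucc : Fin (m+1)) : ℕ))) (p (c ((t.succ : Fin (m+1)) : ℕ)))
      simp only [Fin.coe_castSucc, Fin.val_succ]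
      refine chainSeg (fun x y => x = y ∨ gateRel g t x y) (fun x => Or.inl rfl)
        ?_ p (c (t : ℕ)) (c ((t : ℕ) + 1)) (hmonoc _) ?_
      · rintro x y z (rfl | hxy) (rfl | hyz)
        · exact Or.inl rfl
        · exact Or.inr hyz
        · exact Or.inr hxy
        · exact Or.inl (gateRel_comp hxy hyz)
      · intro v hv1 hv2
        have hvs : v < s := lt_of_lt_of_le hv2 (hcs _)
        set a : Fin s := ⟨v, hvs⟩ with ha
        have hka : ks a = t := by
          have h1 : ¬ ((a : ℕ) < c (t : ℕ)) := by simp [ha]; omega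
          rw [hkey] at h1
          have h2 : (a : ℕ) < c ((t : ℕ) + 1) := hv2
          rw [hkey] at h2
          exact Fin.ext (by omega)
        have hrel := hstep a
        rw [hka] at hrel
        right
        have e1 : p v = q a.castSucc := by
          simp only [hp]
          congr 1
          exact Fin.ext (by simp [ha]; omega)
        have e2 : p (v + 1) = q a.succ := by
          simp only [hp]
          congr 1
          exact Fin.ext (by simp [ha]; omega)
        rw [e1, e2]
        exact hrel
  · rintro ⟨q', hq0, hql, hstep⟩
    set T : Finset (Fin m) :=
      Finset.univ.filter (fun t : Fin m => gateRel g t (q' t.castSucc) (q' t.succ)) with hT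
    set s := T.card with hs
    set e := T.orderIsoOfFin rfl with he
    set p : ℕ → Fin n := fun w => q' ⟨min w m, Nat.lt_succ_of_le (min_le_right w m)⟩ with hp
    have hpq : ∀ w : Fin (m + 1), p (w : ℕ) = q' w := by
      intro w
      simp only [hp]
      congr 1
      exact Fin.ext (by simpa using Nat.lt_succ_iff.mp w.isLt)
    have hconst : ∀ (u v : Fin (m + 1)), u ≤ v →
        (∀ t : Fin m, (u : ℕ) ≤ (t : ℕ) → (t : ℕ) < (v : ℕ) → t ∉ T) → q' u = q' v := by
      intro u v huv hnt
      rw [← hpq u, ← hpq v]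
      refine chainSeg (fun x y : Fin n => x = y) (fun x => rfl) (fun h1 h2 => h1.trans h2)
        p (u : ℕ) (v : ℕ) huv ?_
      intro w hw1 hw2
      have hwm : w < m := lt_of_lt_of_le hw2 (Nat.lt_succ_iff.mp v.isLt)
      set t : Fin m := ⟨w, hwm⟩ with ht
      have e1 : p w = q' t.castSucc := by
        simp only [hp]; congr 1; exact Fin.ext (by simp [ht]; omega)
      have e2 : p (w + 1) = q' t.succ := by
        simp only [hp]; congr 1; exact Fin.ext (by simp [ht]; omega)
      rcases hstep t with heq | hrel
      · rw [e1, e2]; exact heq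
      · exact absurd (by simp [hT]; exact hrel) (hnt t hw1 hw2)
    set ksf : Fin s → Fin m := fun a => (e a : Fin m) with hksf
    have hks_mem : ∀ a, ksf a ∈ T := fun a => (e a).2
    have hrelk : ∀ a, gateRel g (ksf a) (q' (ksf a).castSucc) (q' (ksf a).succ) := fun a => by
      have := hks_mem a
      rw [hT, Finset.mem_filter] at this
      exact this.2
    have hmonoK : Monotone ksf := fun a b hab => Subtype.coe_le_coe.2 (e.monotone hab)
    have hstrict : StrictMono ksf := fun a b hab => Subtype.coe_lt_coe.2 (e.strictMono hab)
    have hsurj : ∀ t ∈ T, ∃ a, ksf a = t := by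
      intro t ht
      exact ⟨e.symm ⟨t, ht⟩, by simp [hksf]⟩
    set qf : Fin (s + 1) → Fin n :=
      fun a => if h : (a : ℕ) < s then q' (ksf ⟨a, h⟩).castSucc else j with hqf
    refine ⟨s, qf, ksf, ?_, ?_, hmonoK, ?_⟩
    · by_cases h0 : 0 < s
      · have e0 : qf 0 = q' (ksf ⟨0, h0⟩).castSucc := by
          simp only [hqf]
          rw [dif_pos (show ((0 : Fin (s+1)) : ℕ) < s from h0)]
          exact congrArg (fun x => q' (ksf x).castSucc) (Fin.ext (by simp))
        rw [e0, ← hq0]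
        refine (hconst 0 (ksf ⟨0, h0⟩).castSucc ?_ ?_).symm
        · exact Fin.zero_le _
        · intro t ht1 ht2 htT
          obtain ⟨b, rfl⟩ := hsurj t htT
          have : b < (⟨0, h0⟩ : Fin s) := by
            rw [← hstrict.lt_iff_lt, Fin.lt_def]
            simpa using ht2
          exact absurd this (by simp [Fin.lt_def])
      · have hs0 : s = 0 := by omega
        have e0 : qf 0 = j := by
          simp only [hqf]
          rw [dif_neg (by omega)]
        have hij : q' 0 = q' (Fin.last m) := by
          refine hconst 0 (Fin.last m) (Fin.zero_le _) ?_
          intro t _ _ htT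
          obtain ⟨b, _⟩ := hsurj t htT
          exact absurd b.isLt (by omega)
        rw [e0, ← hql, ← hij, hq0]
    · simp only [hqf]
      rw [dif_neg (by simp)]
    · intro a
      have ecast : qf a.castSucc = q' (ksf a).castSucc := by
        simp only [hqf]
        rw [dif_pos (show ((a.castSucc : Fin (s+1)) : ℕ) < s by simp [a.isLt])]
        congr 2
      have hmain := hrelk a
      have esucc : qf a.succ = q' (ksf a).succ := by
        by_cases h2 : (a : ℕ) + 1 < s
        · have eq1 : qf a.succ = q' (ksf ⟨(a : ℕ) + 1, h2⟩).castSucc := by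
            simp only [hqf]
            rw [dif_pos (show ((a.succ : Fin (s+1)) : ℕ) < s by simpa using h2)]
            congr 2
          rw [eq1]
          refine (hconst (ksf a).succ (ksf ⟨(a : ℕ) + 1, h2⟩).castSucc ?_ ?_).symm
          · have : ksf a < ksf ⟨(a : ℕ) + 1, h2⟩ := hstrict (by rw [Fin.lt_def]; simp)
            rw [Fin.le_def]
            simp only [Fin.val_succ, Fin.coe_castSucc]
            rw [Fin.lt_def] at this
            omega
          · intro t ht1 ht2 htT
            obtain ⟨b, rfl⟩ := hsurj t htT
            simp only [Fin.val_succ, Fin.coe_castSucc] at ht1 ht2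
            have hab : a < b := by
              rw [← hstrict.lt_iff_lt, Fin.lt_def]; omega
            have hba : b < (⟨(a : ℕ) + 1, h2⟩ : Fin s) := by
              rw [← hstrict.lt_iff_lt, Fin.lt_def]; exact ht2
            simp only [Fin.lt_def, Fin.val_mk] at hab hba
            omega
        · have eq1 : qf a.succ = j := by
            simp only [hqf]
            rw [dif_neg (by simpa using h2)]
          rw [eq1, ← hql]
          refine (hconst (ksf a).succ (Fin.last m) ?_ ?_).symm
          · exact Fin.le_last _
          · intro t ht1 _ htT
            obtain ⟨b, rfl⟩ := hsurj t htT
            simp only [Fin.val_succ] at ht1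
            have hab : a < b := by
              rw [← hstrict.lt_iff_lt, Fin.lt_def]; omega
            rw [Fin.lt_def] at hab
            have := b.isLt
            omega
      rw [ecast, esucc]
      exact hmain

/-- Qubit reachability is captured by the Boolean product of the gate matrices
B_k = I + E_{a_k b_k} + E_{b_k a_k}. -/
theorem reaches_iff_bmul_prod (n m : ℕ) (g : Fin m → Fin n × Fin n) (i j : Fin n) :
    Reaches g i j ↔
      ((List.ofFn fun k : Fin m => Matrix.of fun u v : Fin n =>
          decide (u = v) || decide (gateRel g k u v)).foldr bmul idB) i j = true := by
  rw [reaches_iff_chain, foldr_bmul_iff]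
  simp only [Matrix.of_apply, Bool.or_eq_true, decide_eq_true_eq]
end
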